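/- As operator identities on S(ℝ², ℂ): [a⁻, a⁺] = Id, a⁻∘a⁺ = H + (1/2)·Id, and a⁺∘a⁻ = H − (1/2)·Id. -/

import Mathlib

open MeasureTheory Complex
open scoped ENNReal

noncomputable section

/-- `p_x = −i·ħ₀·∂_x`. -/
def pxOp (hb : ℝ) (f : ℝ × ℝ → ℂ) : ℝ × ℝ → ℂ := fun p =>
  -Complex.I * hb * fderiv ℝ f p (1, 0)

/-- `p_y = −i·ħ₀·∂_y`. -/
def pyOp (hb : ℝ) (f : ℝ × ℝ → ℂ) : ℝ × ℝ → ℂ := fun p =>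
  -Complex.I * hb * fderiv ℝ f p (0, 1)

/-- `Π_x = ((1−r)ħ₀B₀/(ħ₀−rθ₀B₀))·y + (((r+s−rs)θ₀B₀−ħ₀)/(rθ₀B₀−ħ₀))·p_x`. -/
def PixOp (hb th B r s : ℝ) (f : ℝ × ℝ → ℂ) : ℝ × ℝ → ℂ := fun p =>
  ((1 - r) * hb * B / (hb - r * th * B)) * p.2 * f p +
    (((r + s - r * s) * th * B - hb) / (r * th * B - hb)) * pxOp hb f p

/-- `Π_y = −rB₀·x + (1 + r(s−1)θ₀B₀/ħ₀)·p_y`. -/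
def PiyOp (hb th B r s : ℝ) (f : ℝ × ℝ → ℂ) : ℝ × ℝ → ℂ := fun p =>
  -(r * B) * p.1 * f p + (1 + r * (s - 1) * th * B / hb) * pyOp hb f p

/-- `Π̃_x = Π_x / √(ħ₀B₀)`. -/
def PixT (hb th B r s : ℝ) (f : ℝ × ℝ → ℂ) : ℝ × ℝ → ℂ := fun p =>
  (Real.sqrt (hb * B))⁻¹ * PixOp hb th B r s f p

/-- `Π̃_y = Π_y / √(ħ₀B₀)`. -/
def PiyT (hb th B r s : ℝ) (f : ℝ × ℝ → ℂ) : ℝ × ℝ → ℂ := fun p =>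
  (Real.sqrt (hb * B))⁻¹ * PiyOp hb th B r s f p

/-- `a⁻ = (Π̃_x + i Π̃_y)/√2`. -/
def aMinus (hb th B r s : ℝ) (f : ℝ × ℝ → ℂ) : ℝ × ℝ → ℂ := fun p =>
  (PixT hb th B r s f p + Complex.I * PiyT hb th B r s f p) / Real.sqrt 2

/-- `a⁺ = (Π̃_x − i Π̃_y)/√2`. -/
def aPlus (hb th B r s : ℝ) (f : ℝ × ℝ → ℂ) : ℝ × ℝ → ℂ := fun p =>
  (PixT hb th B r s f p - Complex.I * PiyT hb th B r s f p) / Real.sqrt 2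

/-- `H = ((Π̃_x)² + (Π̃_y)²)/2`. -/
def Hop (hb th B r s : ℝ) (f : ℝ × ℝ → ℂ) : ℝ × ℝ → ℂ := fun p =>
  (PixT hb th B r s (PixT hb th B r s f) p + PiyT hb th B r s (PiyT hb th B r s f) p) / 2

/-! Π̃_x and Π̃_y are first-order differential operators with affine coefficients, and the
commutator of two such operators is multiplication by a constant read off from the coefficients
(the second-order terms cancel by symmetry of the Hessian). For Π̃_x, Π̃_y this constant is `i`,
because [Π_x, Π_y] = iħ₀B₀ for every choice of `r` and `s`. Expanding
a∓a± = ((Π̃_x)² + (Π̃_y)² ∓ i[Π̃_x, Π̃_y]) / 2 then gives H ± 1/2, and their difference is Id. -/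

def firstOrderOp (a b c d : ℂ) (g : ℝ × ℝ → ℂ) : ℝ × ℝ → ℂ := fun q =>
  (a * q.1 + b * q.2) * g q + c * fderiv ℝ g q (1, 0) + d * fderiv ℝ g q (0, 1)

section FirstOrderOp

variable {a b c d : ℂ} {g h : ℝ × ℝ → ℂ}

theorem differentiable_firstOrderOp (hg : ContDiff ℝ 2 g) :
    Differentiable ℝ (firstOrderOp a b c d g) := by
  have hg' : Differentiable ℝ (fderiv ℝ g) :=
    (hg.fderiv_right (m := 1) le_rfl).differentiable one_ne_zero
  have hg1 : Differentiable ℝ g := hg.differentiable two_ne_zero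
  unfold firstOrderOp
  fun_prop

theorem firstOrderOp_mul_add_mul (u v : ℂ) (hg : Differentiable ℝ g) (hh : Differentiable ℝ h)
    (q : ℝ × ℝ) :
    firstOrderOp a b c d (fun x => u * g x + v * h x) q =
      u * firstOrderOp a b c d g q + v * firstOrderOp a b c d h q := by
  have hderiv : fderiv ℝ (fun x => u * g x + v * h x) q = u • fderiv ℝ g q + v • fderiv ℝ h q :=
    ((hg q).hasFDerivAt.const_mul u |>.add ((hh q).hasFDerivAt.const_mul v)).fderiv
  simp only [firstOrderOp, hderiv, add_apply, smul_apply, smul_eq_mul]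
  ring

theorem fderiv_firstOrderOp_apply (hg : ContDiff ℝ 2 g) (q v : ℝ × ℝ) :
    fderiv ℝ (firstOrderOp a b c d g) q v =
      (a * v.1 + b * v.2) * g q + (a * q.1 + b * q.2) * fderiv ℝ g q v +
        c * fderiv ℝ (fderiv ℝ g) q v (1, 0) + d * fderiv ℝ (fderiv ℝ g) q v (0, 1) := by
  have hg1 : Differentiable ℝ g := hg.differentiable two_ne_zero
  have hg2 : Differentiable ℝ (fderiv ℝ g) :=
    (hg.fderiv_right (m := 1) le_rfl).differentiable one_ne_zero
  unfold firstOrderOp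
  have hcoord : ∀ w : ℝ × ℝ, fderiv ℝ (fun y : ℝ × ℝ => (y.1 : ℂ)) q w = w.1 ∧
      fderiv ℝ (fun y : ℝ × ℝ => (y.2 : ℂ)) q w = w.2 := fun w =>
    ⟨congrArg (· w) (ofRealCLM.comp (.fst ℝ ℝ ℝ)).fderiv,
      congrArg (· w) (ofRealCLM.comp (.snd ℝ ℝ ℝ)).fderiv⟩
  simp (disch := fun_prop) only [fderiv_fun_add, fderiv_fun_mul, fderiv_clm_apply]
  simp only [fderiv_fun_const, Pi.zero_apply, smul_add, ContinuousLinearMap.comp_zero, zero_add,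
    add_apply, smul_apply, smul_eq_mul, hcoord, zero_apply, mul_zero, add_zero,
    ContinuousLinearMap.flip_apply, add_left_inj]
  ring

theorem firstOrderOp_commutator {a' b' c' d' : ℂ} (hg : ContDiff ℝ 2 g) (q : ℝ × ℝ) :
    firstOrderOp a b c d (firstOrderOp a' b' c' d' g) q -
        firstOrderOp a' b' c' d' (firstOrderOp a b c d g) q =
      (c * a' + d * b' - c' * a - d' * b) * g q := by
  have hsymm : fderiv ℝ (fderiv ℝ g) q (0, 1) (1, 0) = fderiv ℝ (fderiv ℝ g) q (1, 0) (0, 1) :=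
    hg.contDiffAt.isSymmSndFDerivAt (by simp) _ _
  simp only [firstOrderOp, fderiv_firstOrderOp_apply hg, hsymm]
  push_cast
  ring

end FirstOrderOp

section LandauLevels

variable {hb th B r s : ℝ}

theorem PixT_eq_firstOrderOp (g : ℝ × ℝ → ℂ) :
    PixT hb th B r s g =
      firstOrderOp 0 ((√(hb * B))⁻¹ * ((1 - r) * hb * B / (hb - r * th * B)) : ℝ)
        (-I * ((√(hb * B))⁻¹ * hb * (((r + s - r * s) * th * B - hb) / (r * th * B - hb)) : ℝ))
        0 g := by
  funext q
  simp only [PixT, PixOp, pxOp, firstOrderOp]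
  push_cast
  ring

theorem PiyT_eq_firstOrderOp (g : ℝ × ℝ → ℂ) :
    PiyT hb th B r s g = firstOrderOp ((√(hb * B))⁻¹ * -(r * B) : ℝ) 0 0
      (-I * ((√(hb * B))⁻¹ * hb * (1 + r * (s - 1) * th * B / hb) : ℝ)) g := by
  funext q
  simp only [PiyT, PiyOp, pyOp, firstOrderOp]
  push_cast
  ring

-- `[Π_x, Π_y] = iħ₀` times the left-hand side.
theorem PixOp_PiyOp_commutator_coeff (hhb : hb ≠ 0) (hrs : r * th * B ≠ hb) :
    (1 - r) * hb * B / (hb - r * th * B) * (1 + r * (s - 1) * th * B / hb) +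
      r * B * (((r + s - r * s) * th * B - hb) / (r * th * B - hb)) = B := by
  have h : hb - r * th * B ≠ 0 := sub_ne_zero.mpr hrs.symm
  rw [show r * th * B - hb = -(hb - r * th * B) by ring, div_neg]
  field_simp
  rw [div_eq_iff (by contrapose! h; linarith)]
  ring

theorem PixT_PiyT_commutator (hhb : hb ≠ 0) (hrs : r * th * B ≠ hb) (hpos : 0 < hb * B)
    {f : ℝ × ℝ → ℂ} (hf : ContDiff ℝ 2 f) (q : ℝ × ℝ) :
    PixT hb th B r s (PiyT hb th B r s f) q - PiyT hb th B r s (PixT hb th B r s f) q =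
      I * f q := by
  simp only [PixT_eq_firstOrderOp, PiyT_eq_firstOrderOp]
  rw [firstOrderOp_commutator hf]
  have hsq : (√(hb * B))⁻¹ ^ 2 * (hb * B) = 1 := by
    rw [inv_pow, Real.sq_sqrt hpos.le, inv_mul_cancel₀ hpos.ne']
  have hcoeff := congrArg (fun x : ℝ => (x : ℂ)) (PixOp_PiyOp_commutator_coeff (s := s) hhb hrs)
  have hsqC := congrArg (fun x : ℝ => (x : ℂ)) hsq
  push_cast at hcoeff hsqC ⊢
  linear_combination (I * f q * (√(hb * B) : ℂ)⁻¹ ^ 2 * hb) * hcoeff + I * f q * hsqC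

theorem differentiable_PixT {f : ℝ × ℝ → ℂ} (hf : ContDiff ℝ 2 f) :
    Differentiable ℝ (PixT hb th B r s f) := by
  rw [PixT_eq_firstOrderOp]
  exact differentiable_firstOrderOp hf

theorem differentiable_PiyT {f : ℝ × ℝ → ℂ} (hf : ContDiff ℝ 2 f) :
    Differentiable ℝ (PiyT hb th B r s f) := by
  rw [PiyT_eq_firstOrderOp]
  exact differentiable_firstOrderOp hf

theorem PixT_mul_add_mul (u v : ℂ) {g h : ℝ × ℝ → ℂ} (hg : Differentiable ℝ g)
    (hh : Differentiable ℝ h) (q : ℝ × ℝ) :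
    PixT hb th B r s (fun x => u * g x + v * h x) q =
      u * PixT hb th B r s g q + v * PixT hb th B r s h q := by
  simp only [PixT_eq_firstOrderOp, firstOrderOp_mul_add_mul u v hg hh]

theorem PiyT_mul_add_mul (u v : ℂ) {g h : ℝ × ℝ → ℂ} (hg : Differentiable ℝ g)
    (hh : Differentiable ℝ h) (q : ℝ × ℝ) :
    PiyT hb th B r s (fun x => u * g x + v * h x) q =
      u * PiyT hb th B r s g q + v * PiyT hb th B r s h q := by
  simp only [PiyT_eq_firstOrderOp, firstOrderOp_mul_add_mul u v hg hh]

theorem aPlus_eq (g : ℝ × ℝ → ℂ) :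
    aPlus hb th B r s g = fun q =>
      (√2 : ℂ)⁻¹ * PixT hb th B r s g q + (-I * (√2 : ℂ)⁻¹) * PiyT hb th B r s g q := by
  funext q
  simp only [aPlus]
  ring

theorem aMinus_eq (g : ℝ × ℝ → ℂ) :
    aMinus hb th B r s g = fun q =>
      (√2 : ℂ)⁻¹ * PixT hb th B r s g q + (I * (√2 : ℂ)⁻¹) * PiyT hb th B r s g q := by
  funext q
  simp only [aMinus]
  ring

theorem inv_sqrt_two_sq : ((√2 : ℂ)⁻¹) ^ 2 = 1 / 2 := by
  rw [inv_pow, ← ofReal_pow, Real.sq_sqrt zero_le_two]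
  norm_num

theorem aMinus_aPlus (hhb : hb ≠ 0) (hrs : r * th * B ≠ hb) (hpos : 0 < hb * B)
    {f : ℝ × ℝ → ℂ} (hf : ContDiff ℝ 2 f) (q : ℝ × ℝ) :
    aMinus hb th B r s (aPlus hb th B r s f) q = Hop hb th B r s f q + 1 / 2 * f q := by
  have hcomm := PixT_PiyT_commutator (s := s) hhb hrs hpos hf q
  rw [aPlus_eq]
  simp only [aMinus, Hop, PixT_mul_add_mul _ _ (differentiable_PixT hf) (differentiable_PiyT hf),
    PiyT_mul_add_mul _ _ (differentiable_PixT hf) (differentiable_PiyT hf)]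
  set Px := PixT hb th B r s
  set Py := PiyT hb th B r s
  linear_combination (Px (Px f) q + Py (Py f) q + f q) * inv_sqrt_two_sq
    - I * (√2 : ℂ)⁻¹ ^ 2 * hcomm - (√2 : ℂ)⁻¹ ^ 2 * (Py (Py f) q + f q) * I_sq

theorem aPlus_aMinus (hhb : hb ≠ 0) (hrs : r * th * B ≠ hb) (hpos : 0 < hb * B)
    {f : ℝ × ℝ → ℂ} (hf : ContDiff ℝ 2 f) (q : ℝ × ℝ) :
    aPlus hb th B r s (aMinus hb th B r s f) q = Hop hb th B r s f q - 1 / 2 * f q := by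
  have hcomm := PixT_PiyT_commutator (s := s) hhb hrs hpos hf q
  rw [aMinus_eq]
  simp only [aPlus, Hop, PixT_mul_add_mul _ _ (differentiable_PixT hf) (differentiable_PiyT hf),
    PiyT_mul_add_mul _ _ (differentiable_PixT hf) (differentiable_PiyT hf)]
  set Px := PixT hb th B r s
  set Py := PiyT hb th B r s
  linear_combination (Px (Px f) q + Py (Py f) q - f q) * inv_sqrt_two_sq
    + I * (√2 : ℂ)⁻¹ ^ 2 * hcomm - (√2 : ℂ)⁻¹ ^ 2 * (Py (Py f) q - f q) * I_sq

end LandauLevels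

theorem stmt11_general (hb th B r s : ℝ) (hhb : hb ≠ 0) (hrs : r * th * B ≠ hb) (hpos : 0 < hb * B) :
    -- `[a⁻, a⁺] = Id`
    (∀ (f : SchwartzMap (ℝ × ℝ) ℂ) (p : ℝ × ℝ),
      aMinus hb th B r s (aPlus hb th B r s ⇑f) p -
          aPlus hb th B r s (aMinus hb th B r s ⇑f) p = f p) ∧
    -- `a⁻ ∘ a⁺ = H + (1/2)·Id`
    (∀ (f : SchwartzMap (ℝ × ℝ) ℂ) (p : ℝ × ℝ),
      aMinus hb th B r s (aPlus hb th B r s ⇑f) p = Hop hb th B r s ⇑f p + (1 / 2) * f p) ∧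
    -- `a⁺ ∘ a⁻ = H − (1/2)·Id`
    (∀ (f : SchwartzMap (ℝ × ℝ) ℂ) (p : ℝ × ℝ),
      aPlus hb th B r s (aMinus hb th B r s ⇑f) p = Hop hb th B r s ⇑f p - (1 / 2) * f p) := by
  have hf : ∀ f : SchwartzMap (ℝ × ℝ) ℂ, ContDiff ℝ 2 f := fun f => f.smooth 2
  refine ⟨fun f p => ?_, fun f p => aMinus_aPlus hhb hrs hpos (hf f) p,
    fun f p => aPlus_aMinus hhb hrs hpos (hf f) p⟩
  rw [aMinus_aPlus hhb hrs hpos (hf f) p, aPlus_aMinus hhb hrs hpos (hf f) p]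
  ring

theorem stmt11 (hb th B r s : ℝ) (hhb : hb ≠ 0) (hth : th ≠ 0) (hB : B ≠ 0)
    (hnd : hb - th * B ≠ 0) (hrs : r * th * B ≠ hb) (hpos : 0 < hb * B) :
    -- `[a⁻, a⁺] = Id`
    (∀ (f : SchwartzMap (ℝ × ℝ) ℂ) (p : ℝ × ℝ),
      aMinus hb th B r s (aPlus hb th B r s ⇑f) p -
          aPlus hb th B r s (aMinus hb th B r s ⇑f) p = f p) ∧
    -- `a⁻ ∘ a⁺ = H + (1/2)·Id`
    (∀ (f : SchwartzMap (ℝ × ℝ) ℂ) (p : ℝ × ℝ),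
      aMinus hb th B r s (aPlus hb th B r s ⇑f) p = Hop hb th B r s ⇑f p + (1 / 2) * f p) ∧
    -- `a⁺ ∘ a⁻ = H − (1/2)·Id`
    (∀ (f : SchwartzMap (ℝ × ℝ) ℂ) (p : ℝ × ℝ),
      aPlus hb th B r s (aMinus hb th B r s ⇑f) p = Hop hb th B r s ⇑f p - (1 / 2) * f p) :=
  stmt11_general hb th B r s hhb hrs hpos
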